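/- arXiv:math/0511667 — 5 statements merged into one kernel-verified Lean document; each statement's English description precedes it below -/
import Mathlib

section
/- Let X be a class of groups closed under homomorphic images. If for each i in {1,...,t} the group H_i contains a subset of size n_i + 1 such that no two distinct elements of the subset generate a group in X, then the direct product H_1 × ... × H_t contains a subset of size (n_1 + ... + n_t) + 1 such that no two distinct elements generate a group in X. -/
/-!
Choose bad sets `S i` of size `n i + 1`. Two distinct elements `x, y` of `∏ i, S i` differ in some
coordinate `i`, and `⟨x i, y i⟩` is a homomorphic image of `⟨x, y⟩`, so `⟨x, y⟩` is not in `X`.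
Since `∑ n i + 1 ≤ ∏ (n i + 1)`, any subset of `∏ i, S i` of size `∑ n i + 1` does the job.
-/

universe u

open Finset

theorem Finset.sum_add_one_le_prod_add_one {ι R : Type*} [CommSemiring R] [PartialOrder R]
    [IsOrderedRing R] (s : Finset ι) {f : ι → R} (hf : ∀ i ∈ s, 0 ≤ f i) :
    ∑ i ∈ s, f i + 1 ≤ ∏ i ∈ s, (f i + 1) := by
  classical
  induction s using Finset.induction_on with
  | empty => simp
  | insert a s ha ih =>
    have hs : ∀ i ∈ s, 0 ≤ f i := fun i hi ↦ hf i (mem_insert_of_mem hi)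
    have hprod : 1 ≤ ∏ i ∈ s, (f i + 1) :=
      (ih hs).trans' (le_add_of_nonneg_left (sum_nonneg hs))
    rw [sum_insert ha, prod_insert ha, add_assoc, add_mul, one_mul]
    gcongr
    · exact le_mul_of_one_le_right (hf a (mem_insert_self a s)) hprod
    · exact ih hs

theorem MonoidHom.closure_pair_map {X : ∀ (G : Type u) [Group G], Prop}
    (hX : ∀ (G H : Type u) [Group G] [Group H] (f : G →* H), Function.Surjective f → X G → X H)
    {G H : Type u} [Group G] [Group H] (f : G →* H) {x y : G}
    (h : X (Subgroup.closure ({x, y} : Set G))) :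
    X (Subgroup.closure ({f x, f y} : Set H)) := by
  have hmap := hX _ _ (f.subgroupMap _) (f.subgroupMap_surjective _) h
  rwa [MonoidHom.map_closure, Set.image_pair] at hmap

theorem Set.pairwise_not_closure_pair_pi {X : ∀ (G : Type u) [Group G], Prop}
    (hX : ∀ (G H : Type u) [Group G] [Group H] (f : G →* H), Function.Surjective f → X G → X H)
    {ι : Type} {H : ι → Type u} [∀ i, Group (H i)] {S : ∀ i, Set (H i)}
    (hS : ∀ i, (S i).Pairwise fun x y ↦ ¬ X (Subgroup.closure {x, y})) :
    (Set.univ.pi S).Pairwise fun x y ↦ ¬ X (Subgroup.closure {x, y}) := by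
  intro x hx y hy hxy hXxy
  obtain ⟨i, hi⟩ := Function.ne_iff.mp hxy
  exact hS i (hx i trivial) (hy i trivial) hi ((Pi.evalMonoidHom H i).closure_pair_map hX hXxy)

theorem stmt0
    (X : ∀ (G : Type u) [Group G], Prop)
    (hX : ∀ (G H : Type u) [Group G] [Group H] (f : G →* H),
      Function.Surjective f → X G → X H)
    (t : ℕ) (Hg : Fin t → Type u) [∀ i, Group (Hg i)] (nf : Fin t → ℕ)
    (hyp : ∀ i, ∃ S : Finset (Hg i), S.card = nf i + 1 ∧
      ∀ x ∈ S, ∀ y ∈ S, x ≠ y → ¬ X ↥(Subgroup.closure ({x, y} : Set (Hg i)))) :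
    ∃ S : Finset (∀ i, Hg i), S.card = (∑ i, nf i) + 1 ∧
      ∀ x ∈ S, ∀ y ∈ S, x ≠ y →
        ¬ X ↥(Subgroup.closure ({x, y} : Set (∀ i, Hg i))) := by
  choose S hcard hS using hyp
  have hle : ∑ i, nf i + 1 ≤ #(Fintype.piFinset S) := by
    simpa [hcard] using univ.sum_add_one_le_prod_add_one fun i _ ↦ (nf i).zero_le
  obtain ⟨T, hT, hTcard⟩ := exists_subset_card_eq hle
  have hpi := Set.pairwise_not_closure_pair_pi hX fun i ↦ hS i
  refine ⟨T, hTcard, hpi.mono ?_⟩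
  rw [← Fintype.coe_piFinset]
  exact_mod_cast hT
end

section
/- Suppose H_1, ..., H_t are finite groups such that for each i, H_i contains a subset of size n_i + 1 in which no two distinct elements generate a nilpotent subgroup. Then the direct product H_1 × ... × H_t contains a subset of size (n_1+1)(n_2+1)···(n_t+1) in which no two distinct elements generate a nilpotent subgroup. -/
universe u

theorem Subgroup.isNilpotent_closure_image {G H : Type*} [Group G] [Group H] (f : G →* H)
    (s : Set G) (hs : Group.IsNilpotent (closure s)) : Group.IsNilpotent (closure (f '' s)) := by
  rw [← MonoidHom.map_closure]
  exact Group.nilpotent_of_surjective (f.subgroupMap (closure s)) (f.subgroupMap_surjective _)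

theorem Subgroup.isNilpotent_closure_pair_eval {ι : Type*} {G : ι → Type*} [∀ i, Group (G i)]
    {x y : ∀ i, G i} (h : Group.IsNilpotent (closure ({x, y} : Set (∀ i, G i)))) (i : ι) :
    Group.IsNilpotent (closure ({x i, y i} : Set (G i))) := by
  have := isNilpotent_closure_image (Pi.evalMonoidHom G i) _ h
  rwa [Set.image_pair] at this

theorem stmt1_general (t : ℕ) (Hg : Fin t → Type u) [∀ i, Group (Hg i)]
    (nf : Fin t → ℕ)
    (hyp : ∀ i, ∃ S : Finset (Hg i), S.card = nf i + 1 ∧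
      ∀ x ∈ S, ∀ y ∈ S, x ≠ y →
        ¬ Group.IsNilpotent ↥(Subgroup.closure ({x, y} : Set (Hg i)))) :
    ∃ S : Finset (∀ i, Hg i), S.card = ∏ i, (nf i + 1) ∧
      ∀ x ∈ S, ∀ y ∈ S, x ≠ y →
        ¬ Group.IsNilpotent ↥(Subgroup.closure ({x, y} : Set (∀ i, Hg i))) := by
  choose S hScard hS using hyp
  refine ⟨Fintype.piFinset S, by simp [hScard], ?_⟩
  intro x hx y hy hxy hnil
  rw [Fintype.mem_piFinset] at hx hy
  -- distinct tuples differ in some coordinate, where the projected pair is still nilpotent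
  obtain ⟨i, hi⟩ := Function.ne_iff.mp hxy
  exact hS i _ (hx i) _ (hy i) hi (Subgroup.isNilpotent_closure_pair_eval hnil i)

theorem stmt1 (t : ℕ) (Hg : Fin t → Type u) [∀ i, Group (Hg i)] [∀ i, Finite (Hg i)]
    (nf : Fin t → ℕ)
    (hyp : ∀ i, ∃ S : Finset (Hg i), S.card = nf i + 1 ∧
      ∀ x ∈ S, ∀ y ∈ S, x ≠ y →
        ¬ Group.IsNilpotent ↥(Subgroup.closure ({x, y} : Set (Hg i)))) :
    ∃ S : Finset (∀ i, Hg i), S.card = ∏ i, (nf i + 1) ∧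
      ∀ x ∈ S, ∀ y ∈ S, x ≠ y →
        ¬ Group.IsNilpotent ↥(Subgroup.closure ({x, y} : Set (∀ i, Hg i))) :=
  stmt1_general t Hg nf hyp
end

section
/- Let p be a prime, n a positive integer, and q an odd prime dividing p^n − 1. Then the number of Sylow q-subgroups of PSL(2, p^n) equals p^n(p^n + 1)/2, and the intersection of any two distinct Sylow q-subgroups is trivial. -/
/-!
Let `r = |K|` and let `q` be an odd prime dividing `r - 1`. The diagonal torus `T ≅ Kˣ` of
`SL(2, K)` has index `r (r + 1)`, prime to `q`, so it contains a Sylow `q`-subgroup `P`. A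
nontrivial element of `P` has odd order, hence eigenvalues `λ ≠ λ⁻¹`, so its centralizer is
`T` and, by comparing traces, its normalizer is `T ∪ wT` for the Weyl element `w`. Thus
`|N(P)| = 2 (r - 1)` and there are `r (r + 1) / 2` Sylow `q`-subgroups. Two Sylow subgroups sharing
a nontrivial element `x` both lie in the centralizer of `x`, a conjugate of the abelian group `T`,
in which the Sylow subgroup is unique. The centre of `SL(2, K)` has order at most `2`, prime to
`q`, so passing to `PSL(2, K)` is a bijection on Sylow `q`-subgroups preserving trivial
intersections.
-/

abbrev PSL (p n : ℕ) [Fact p.Prime] : Type :=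
  Matrix.SpecialLinearGroup (Fin 2) (GaloisField p n) ⧸
    Subgroup.center (Matrix.SpecialLinearGroup (Fin 2) (GaloisField p n))

open Matrix Subgroup Pointwise
open scoped MatrixGroups

lemma IsPGroup.pow_two_ne_one {G : Type*} [Group G] {p : ℕ} (hp : Odd p) {P : Subgroup G}
    (hP : IsPGroup p P) {x : G} (hx : x ∈ P) (hx1 : x ≠ 1) : x ^ 2 ≠ 1 := by
  obtain ⟨k, hk⟩ := hP ⟨x, hx⟩
  replace hk : x ^ p ^ k = 1 := by simpa [Subtype.ext_iff] using hk
  intro h2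
  have hgcd : Nat.gcd 2 (p ^ k) = 1 := Nat.coprime_two_left.mpr hp.pow
  exact hx1 (by simpa [hgcd] using pow_gcd_eq_one.mpr ⟨h2, hk⟩)

lemma Nat.not_dvd_mul_add_one_of_dvd_sub_one {q r : ℕ} (hq : q.Prime) (hodd : Odd q)
    (hr : r ≠ 0) (h : q ∣ r - 1) : ¬ q ∣ r * (r + 1) := by
  intro hdvd
  rcases hq.dvd_mul.mp hdvd with hr' | hr'
  · have h1 : q ∣ r - (r - 1) := Nat.dvd_sub hr' h
    rw [show r - (r - 1) = 1 by omega, Nat.dvd_one] at h1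
    exact hq.ne_one h1
  · have h2 : q ∣ r + 1 - (r - 1) := Nat.dvd_sub hr' h
    rw [show r + 1 - (r - 1) = 2 by omega, Nat.prime_dvd_prime_iff_eq hq Nat.prime_two] at h2
    exact Nat.not_odd_iff_even.mpr (h2 ▸ even_two) hodd

section CentralQuotient

variable {G G' : Type*} [Group G] [Group G'] {p : ℕ}

lemma eq_one_of_mem_of_coprime_card {N : Subgroup G} (hN : (Nat.card N).Coprime p) {z : G}
    (hz : z ∈ N) {k : ℕ} (hzk : z ^ p ^ k = 1) : z = 1 := by
  have hzN : z ^ Nat.card N = 1 := by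
    have := congrArg Subtype.val (pow_card_eq_one' (x := (⟨z, hz⟩ : N)))
    rwa [SubgroupClass.coe_pow, OneMemClass.coe_one] at this
  simpa [(hN.pow_right k).gcd_eq_one] using pow_gcd_eq_one.mpr ⟨hzN, hzk⟩

variable {f : G →* G'} (hker : f.ker ≤ center G) (hcop : (Nat.card f.ker).Coprime p)
include hker hcop

lemma IsPGroup.eq_of_map_eq_of_ker_le_center {P Q : Subgroup G} (hP : IsPGroup p P)
    (hQ : IsPGroup p Q) {x y : G} (hx : x ∈ P) (hy : y ∈ Q) (h : f x = f y) : x = y := by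
  obtain ⟨k, hxk⟩ := hP ⟨x, hx⟩
  obtain ⟨l, hyl⟩ := hQ ⟨y, hy⟩
  replace hxk : x ^ p ^ k = 1 := by simpa [Subtype.ext_iff] using hxk
  replace hyl : y ^ p ^ l = 1 := by simpa [Subtype.ext_iff] using hyl
  have hz : x⁻¹ * y ∈ f.ker := by simp [MonoidHom.mem_ker, h]
  -- `x⁻¹ * y` is central, so `x` and `y` commute and `x⁻¹ * y` has `p`-power order
  have hcomm : Commute x⁻¹ y := by
    have hcentral : Commute x⁻¹ (x⁻¹ * y) := mem_center_iff.mp (hker hz) x⁻¹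
    simpa using (Commute.refl x).inv_left.mul_right hcentral
  have : x⁻¹ * y = 1 := eq_one_of_mem_of_coprime_card hcop hz (k := k + l) (by
    rw [hcomm.mul_pow, inv_pow, pow_add, pow_mul, hxk, mul_comm, pow_mul, hyl]; simp)
  exact inv_mul_eq_one.mp this

lemma IsPGroup.le_of_map_le_of_ker_le_center {P Q : Subgroup G} (hP : IsPGroup p P)
    (hQ : IsPGroup p Q) (h : P.map f ≤ Q.map f) : P ≤ Q := by
  intro x hx
  obtain ⟨y, hy, hyx⟩ := h (mem_map_of_mem f hx)
  rwa [← hQ.eq_of_map_eq_of_ker_le_center hker hcop hP hy hx hyx]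

lemma IsPGroup.map_inf_of_ker_le_center {P Q : Subgroup G} (hP : IsPGroup p P)
    (hQ : IsPGroup p Q) : (P ⊓ Q).map f = P.map f ⊓ Q.map f := by
  refine le_antisymm (map_inf_le _ _ _) ?_
  rintro _ ⟨⟨x, hx, rfl⟩, ⟨y, hy, hyx⟩⟩
  rw [hQ.eq_of_map_eq_of_ker_le_center hker hcop hP hy hx hyx] at hy
  exact mem_map_of_mem f ⟨hx, hy⟩

variable [Finite G] [Fact p.Prime] (hf : Function.Surjective f)
include hf

lemma Sylow.mapSurjective_bijective_of_ker_le_center :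
    Function.Bijective (Sylow.mapSurjective hf : Sylow p G → Sylow p G') := by
  refine ⟨fun P Q hPQ ↦ ?_, Sylow.mapSurjective_surjective hf p⟩
  have hmap : (P : Subgroup G).map f = (Q : Subgroup G).map f := by
    simpa [Sylow.ext_iff] using hPQ
  exact Sylow.ext (P.3 Q.2 (P.2.le_of_map_le_of_ker_le_center hker hcop Q.2 hmap.le)).symm

lemma Sylow.pairwise_inf_eq_bot_of_ker_le_center
    (hG : Pairwise fun P Q : Sylow p G ↦ (P : Subgroup G) ⊓ Q = ⊥) :
    Pairwise fun P Q : Sylow p G' ↦ (P : Subgroup G') ⊓ Q = ⊥ := by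
  intro P' Q' hne
  obtain ⟨P, rfl⟩ := Sylow.mapSurjective_surjective hf p P'
  obtain ⟨Q, rfl⟩ := Sylow.mapSurjective_surjective hf p Q'
  rw [Sylow.coe_mapSurjective, Sylow.coe_mapSurjective,
    ← P.2.map_inf_of_ker_le_center hker hcop Q.2, hG (ne_of_apply_ne _ hne), Subgroup.map_bot]

end CentralQuotient

namespace Sylow

variable {G : Type*} [Group G] {p : ℕ}

lemma mem_smul_iff {g x : G} {P : Sylow p G} : x ∈ g • P ↔ g⁻¹ * x * g ∈ P := by
  change x ∈ MulAut.conj g • (P : Subgroup G) ↔ _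
  rw [mem_pointwise_smul_iff_inv_smul_mem, MulAut.smul_def, MulAut.conj_inv_apply]
  rfl

variable [Finite G] [Fact p.Prime]

lemma exists_le_of_not_dvd_index {H : Subgroup G} (h : ¬ p ∣ H.index) :
    ∃ P : Sylow p G, (P : Subgroup G) ≤ H := by
  let S : Sylow p H := default
  refine ⟨(S.2.map H.subtype).toSylow ?_, map_subtype_le _⟩
  rw [index_map_subtype]
  exact Nat.Prime.not_dvd_mul Fact.out S.not_dvd_index h

lemma eq_of_le_of_isMulCommutative {A : Subgroup G} [IsMulCommutative A] {P Q : Sylow p G}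
    (hP : (P : Subgroup G) ≤ A) (hQ : (Q : Subgroup G) ≤ A) : P = Q := by
  have := unique_of_normal (P.subtype hP) inferInstance
  exact subtype_injective (Subsingleton.elim (P.subtype hP) (Q.subtype hQ))

lemma pairwise_inf_eq_bot_of_centralizer_le (A : Subgroup G) [IsMulCommutative A]
    (P₀ : Sylow p G) (hP₀ : (P₀ : Subgroup G) ≤ A)
    (hcent : ∀ x ∈ P₀, x ≠ 1 → centralizer {x} ≤ A) :
    Pairwise fun P Q : Sylow p G ↦ (P : Subgroup G) ⊓ Q = ⊥ := by
  -- every Sylow subgroup is conjugate to `P₀ ≤ A`, hence abelian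
  have hcomm (Q : Sylow p G) {y z : G} (hy : y ∈ Q) (hz : z ∈ Q) : y * z = z * y := by
    obtain ⟨h, rfl⟩ := MulAction.exists_smul_eq G P₀ Q
    rw [mem_smul_iff] at hy hz
    have := setLike_mul_comm (hP₀ hy) (hP₀ hz)
    exact mul_right_cancel (b := h) (by simpa [mul_assoc] using this)
  have heq (Q : Sylow p G) {x : G} (hxP : x ∈ P₀) (hxQ : x ∈ Q) (hx : x ≠ 1) : Q = P₀ :=
    eq_of_le_of_isMulCommutative (fun y hy ↦ hcent x hxP hx (by
      simpa [mem_centralizer_singleton_iff] using hcomm Q hy hxQ)) hP₀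
  intro P Q hPQ
  obtain ⟨g, rfl⟩ := MulAction.exists_smul_eq G P₀ P
  refine eq_bot_iff.mpr fun x ⟨hxP, hxQ⟩ ↦ ?_
  by_contra hx
  have hx' : g⁻¹ * x * g ≠ 1 := by simpa [mul_assoc, inv_mul_eq_one] using hx
  refine hPQ ?_
  rw [← heq (g⁻¹ • Q) (mem_smul_iff.mp hxP) ?_ hx', smul_inv_smul]
  simpa [mem_smul_iff, mul_assoc] using hxQ

end Sylow

namespace Matrix.SpecialLinearGroup

lemma card_mul_card_units {n R : Type*} [Fintype n] [DecidableEq n] [Nonempty n] [CommRing R] :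
    Nat.card (SpecialLinearGroup n R) * Nat.card Rˣ = Nat.card (GL n R) := by
  rw [card_eq_card_quotient_mul_card_subgroup GeneralLinearGroup.det.ker, mul_comm,
    Nat.card_congr (QuotientGroup.quotientKerEquivOfSurjective _
      GeneralLinearGroup.det_surjective).toEquiv, ← SetLike.coe_sort_coe, MonoidHom.coe_ker,
    ← range_toGL, Nat.card_range_of_injective toGL_injective]

lemma card_SL_two {K : Type*} [Field K] [Finite K] :
    Nat.card SL(2, K) = (Nat.card K - 1) * (Nat.card K * (Nat.card K + 1)) := by
  have := Fintype.ofFinite K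
  have hK : 2 ≤ Nat.card K := Finite.one_lt_card
  have h := card_mul_card_units (n := Fin 2) (R := K)
  rw [card_GL_field, Nat.card_units, Fin.prod_univ_two, ← Nat.card_eq_fintype_card] at h
  obtain ⟨m, hm⟩ : ∃ m, Nat.card K = m + 2 := ⟨_, (Nat.sub_add_cancel hK).symm⟩
  rw [hm] at h ⊢
  refine Nat.eq_of_mul_eq_mul_right (by omega : 0 < m + 2 - 1) ?_
  rw [h]
  simp only [Fin.val_zero, Fin.val_one, pow_zero, pow_one]
  rw [Nat.sub_eq_of_eq_add (by ring : (m + 2) ^ 2 = (m + 1) * (m + 3) + 1),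
    Nat.sub_eq_of_eq_add (by ring : (m + 2) ^ 2 = (m + 2) * (m + 1) + (m + 2)),
    (by omega : m + 2 - 1 = m + 1)]
  ring

variable (K : Type*) [Field K]

def diagUnits : Kˣ →* SL(2, K) where
  toFun u := ⟨diagonal ![(u : K), (u : K)⁻¹], by simp [det_diagonal, Fin.prod_univ_two]⟩
  map_one' := Subtype.ext <| by simp [← diagonal_one]
  map_mul' u v := Subtype.ext <| by
    change diagonal _ = diagonal _ * diagonal _
    rw [diagonal_mul_diagonal]
    congr 1
    ext i
    fin_cases i <;> simp [mul_comm]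

def torus : Subgroup SL(2, K) := (diagUnits K).range

def weyl : SL(2, K) := ⟨!![0, 1; -1, 0], by simp [det_fin_two]⟩

variable {K}

lemma coe_diagUnits (u : Kˣ) :
    (diagUnits K u : Matrix (Fin 2) (Fin 2) K) = diagonal ![(u : K), (u : K)⁻¹] :=
  rfl

lemma diagUnits_injective : Function.Injective (diagUnits K) := fun u v h ↦
  Units.ext (by simpa [coe_diagUnits] using congr_fun₂ (congrArg Subtype.val h) 0 0)

lemma coe_weyl : (weyl K : Matrix (Fin 2) (Fin 2) K) = !![0, 1; -1, 0] :=
  rfl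

instance : IsMulCommutative (torus K) := range_isMulCommutative _

lemma card_torus [Finite K] : Nat.card (torus K) = Nat.card K - 1 := by
  rw [torus, ← Nat.card_units, Nat.card_congr (MonoidHom.ofInjective diagUnits_injective).toEquiv]

lemma weyl_mul_diagUnits (u : Kˣ) : weyl K * diagUnits K u = diagUnits K u⁻¹ * weyl K := by
  ext i j
  simp only [coe_mul, coe_weyl, coe_diagUnits]
  fin_cases i <;> fin_cases j <;> simp [mul_apply]

lemma weyl_not_mem_torus : weyl K ∉ torus K := by
  rintro ⟨u, hu⟩
  simpa [coe_weyl, coe_diagUnits] using congr_fun₂ (congrArg Subtype.val hu) 0 0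

lemma mem_torus_of_commute {g : SL(2, K)} {u : Kˣ} (hu : u ^ 2 ≠ 1)
    (h : Commute g (diagUnits K u)) : g ∈ torus K := by
  set d : Fin 2 → K := ![(u : K), (u : K)⁻¹]
  have hd : d 0 ≠ d 1 := fun h ↦ hu <| by
    rw [pow_two, mul_eq_one_iff_eq_inv]
    exact Units.ext (by simpa [d] using h)
  have hmat : (g : Matrix (Fin 2) (Fin 2) K) * diagonal d = diagonal d * g :=
    congrArg (fun g : SL(2, K) ↦ (g : Matrix (Fin 2) (Fin 2) K)) h.eq
  have hoff (i j : Fin 2) (hij : d i ≠ d j) : (g : Matrix (Fin 2) (Fin 2) K) i j = 0 := by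
    have hij' := congrFun (congrFun hmat i) j
    rw [mul_diagonal, diagonal_mul] at hij'
    refine (mul_eq_zero.mp ?_).resolve_right (sub_ne_zero.mpr hij.symm)
    linear_combination hij'
  have hdet : (g : Matrix (Fin 2) (Fin 2) K) 0 0 * (g : Matrix (Fin 2) (Fin 2) K) 1 1 = 1 := by
    have hdet := g.det_coe
    rwa [det_fin_two, hoff 0 1 hd, zero_mul, sub_zero] at hdet
  refine ⟨Units.mk0 _ (left_ne_zero_of_mul_eq_one hdet), ?_⟩
  ext i j
  fin_cases i <;> fin_cases j <;>
    simp [coe_diagUnits, hoff 0 1 hd, hoff 1 0 hd.symm, eq_inv_of_mul_eq_one_right hdet]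

lemma centralizer_le_torus {x : SL(2, K)} (hx : x ∈ torus K) (hx2 : x ^ 2 ≠ 1) :
    centralizer {x} ≤ torus K := by
  obtain ⟨u, rfl⟩ := hx
  have hu : u ^ 2 ≠ 1 := fun hu ↦ hx2 (by rw [← map_pow, hu, map_one])
  exact fun g hg ↦ mem_torus_of_commute hu (mem_centralizer_singleton_iff.mp hg)

lemma eq_or_eq_inv_of_conj_diagUnits {g : SL(2, K)} {u v : Kˣ}
    (h : g * diagUnits K u * g⁻¹ = diagUnits K v) : v = u ∨ v = u⁻¹ := by
  have htr := congrArg (fun g : SL(2, K) ↦ trace (g : Matrix (Fin 2) (Fin 2) K)) h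
  simp only [coe_mul] at htr
  rw [trace_mul_comm, ← mul_assoc, ← coe_mul, inv_mul_cancel, coe_one, one_mul] at htr
  simp only [coe_diagUnits, trace_fin_two, diagonal_apply_eq, cons_val_zero, cons_val_one] at htr
  have hprod : ((v : K) - u) * ((v : K) * u - 1) = 0 := by
    field_simp at htr
    linear_combination -htr
  rcases mul_eq_zero.mp hprod with h | h
  · exact .inl (Units.ext (sub_eq_zero.mp h))
  · exact .inr (Units.ext (by simpa using eq_inv_of_mul_eq_one_left (sub_eq_zero.mp h)))

variable [Finite K]

lemma coe_normalizer_eq {H : Subgroup SL(2, K)} (hH : H ≤ torus K) {u : Kˣ} (hu : u ^ 2 ≠ 1)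
    (huH : diagUnits K u ∈ H) :
    (normalizer (H : Set SL(2, K)) : Set SL(2, K)) =
      (torus K : Set SL(2, K)) ∪ weyl K • (torus K : Set SL(2, K)) := by
  have htorus : torus K ≤ normalizer (H : Set SL(2, K)) := le_normalizer_of_normal_subgroupOf hH
  have hweyl : weyl K ∈ normalizer (H : Set SL(2, K)) := by
    refine mem_normalizer_fintype fun h hh ↦ ?_
    obtain ⟨v, rfl⟩ := hH hh
    rw [weyl_mul_diagUnits, mul_inv_cancel_right, map_inv]
    exact inv_mem hh
  ext g
  constructor
  · intro hg
    obtain ⟨v, hv⟩ := hH ((mem_normalizer_iff.mp hg _).mp huH)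
    have hgu : g * diagUnits K u = diagUnits K v * g := by
      rw [hv, inv_mul_cancel_right]
    rcases eq_or_eq_inv_of_conj_diagUnits hv.symm with rfl | rfl
    · exact .inl (mem_torus_of_commute hu hgu)
    · have hW : (weyl K)⁻¹ * diagUnits K u⁻¹ = diagUnits K u * (weyl K)⁻¹ := by
        rw [inv_mul_eq_iff_eq_mul, ← mul_assoc, weyl_mul_diagUnits, mul_inv_cancel_right]
      refine .inr (Set.mem_smul_set_iff_inv_smul_mem.mpr (mem_torus_of_commute hu ?_))
      change (weyl K)⁻¹ * g * _ = _ * ((weyl K)⁻¹ * g)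
      rw [mul_assoc, hgu, ← mul_assoc, hW, mul_assoc]
  · rintro (hg | ⟨t, ht, rfl⟩)
    · exact htorus hg
    · exact mul_mem hweyl (htorus ht)

lemma card_normalizer {H : Subgroup SL(2, K)} (hH : H ≤ torus K) {u : Kˣ} (hu : u ^ 2 ≠ 1)
    (huH : diagUnits K u ∈ H) :
    Nat.card (normalizer (H : Set SL(2, K))) = 2 * Nat.card (torus K) := by
  have hdisj : Disjoint (torus K : Set SL(2, K)) (weyl K • (torus K : Set SL(2, K))) := by
    refine Set.disjoint_left.mpr ?_
    rintro _ hg ⟨t, ht, rfl⟩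
    refine weyl_not_mem_torus (K := K) ?_
    rw [← mul_inv_cancel_right (weyl K) t]
    exact mul_mem hg (inv_mem ht)
  rw [← SetLike.coe_sort_coe, Nat.card_coe_set_eq, coe_normalizer_eq hH hu huH,
    Set.ncard_union_eq hdisj (Set.toFinite _) (Set.toFinite _), Set.ncard_smul_set,
    ← Nat.card_coe_set_eq, SetLike.coe_sort_coe, two_mul]

section Sylow

variable {K : Type*} [Field K] [Finite K] {q : ℕ}

lemma coprime_card_center (hodd : Odd q) : (Nat.card (center SL(2, K))).Coprime q := by
  have hle : Nat.card (center SL(2, K)) ≤ 2 := by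
    rw [Nat.card_congr center_equiv_rootsOfUnity.toEquiv]
    exact card_rootsOfUnity K 2
  have hpos : 0 < Nat.card (center SL(2, K)) := Nat.card_pos
  interval_cases Nat.card (center SL(2, K))
  · exact Nat.coprime_one_left q
  · exact Nat.coprime_two_left.mpr hodd

lemma index_torus : (torus K).index = Nat.card K * (Nat.card K + 1) := by
  have h := card_mul_index (torus K)
  rw [card_torus, card_SL_two] at h
  exact Nat.eq_of_mul_eq_mul_left (Nat.sub_pos_of_lt Finite.one_lt_card) h

variable [Fact q.Prime]

lemma exists_sylow_le_torus (hodd : Odd q) (hdvd : q ∣ Nat.card K - 1) :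
    ∃ P : Sylow q SL(2, K), (P : Subgroup SL(2, K)) ≤ torus K :=
  Sylow.exists_le_of_not_dvd_index <| by
    rw [index_torus]
    exact Nat.not_dvd_mul_add_one_of_dvd_sub_one Fact.out hodd Nat.card_pos.ne' hdvd

theorem card_sylow_eq (hodd : Odd q) (hdvd : q ∣ Nat.card K - 1) :
    Nat.card (Sylow q SL(2, K)) = Nat.card K * (Nat.card K + 1) / 2 := by
  obtain ⟨P, hPT⟩ := exists_sylow_le_torus hodd hdvd
  have hq_dvd : q ∣ Nat.card SL(2, K) := card_SL_two (K := K) ▸ hdvd.mul_right _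
  obtain ⟨x, hxP, hx1⟩ := (bot_or_exists_ne_one _).resolve_left (P.ne_bot_of_dvd_card hq_dvd)
  obtain ⟨u, hu⟩ := hPT hxP
  have hu2 : u ^ 2 ≠ 1 := fun h ↦
    P.2.pow_two_ne_one hodd hxP hx1 (by rw [← hu, ← map_pow, h, map_one])
  have hN : Nat.card (normalizer (P : Set SL(2, K))) = 2 * (Nat.card K - 1) := by
    rw [← card_torus]
    exact card_normalizer hPT hu2 (hu ▸ hxP)
  have h := card_mul_index (normalizer (P : Set SL(2, K)))
  rw [hN, card_SL_two] at h
  rw [P.card_eq_index_normalizer]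
  have hr : 0 < Nat.card K - 1 := Nat.sub_pos_of_lt Finite.one_lt_card
  have : 2 * (normalizer (P : Set SL(2, K))).index = Nat.card K * (Nat.card K + 1) :=
    Nat.eq_of_mul_eq_mul_left hr (by rw [← h]; ring)
  omega

theorem pairwise_inf_sylow_eq_bot (hodd : Odd q) (hdvd : q ∣ Nat.card K - 1) :
    Pairwise fun P Q : Sylow q SL(2, K) ↦ (P : Subgroup SL(2, K)) ⊓ Q = ⊥ := by
  obtain ⟨P, hPT⟩ := exists_sylow_le_torus hodd hdvd
  exact Sylow.pairwise_inf_eq_bot_of_centralizer_le (torus K) P hPT fun x hx hx1 ↦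
    centralizer_le_torus (hPT hx) (P.2.pow_two_ne_one hodd hx hx1)

end Sylow

end Matrix.SpecialLinearGroup

namespace Matrix.ProjectiveSpecialLinearGroup

variable {K : Type*} [Field K] [Finite K] {q : ℕ}

lemma coprime_card_ker_mk' (hodd : Odd q) :
    (Nat.card (QuotientGroup.mk' (center SL(2, K))).ker).Coprime q := by
  rw [QuotientGroup.ker_mk']
  exact SpecialLinearGroup.coprime_card_center hodd

variable [Fact q.Prime]

theorem card_sylow_eq (hodd : Odd q) (hdvd : q ∣ Nat.card K - 1) :
    Nat.card (Sylow q PSL(2, K)) = Nat.card K * (Nat.card K + 1) / 2 := by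
  rw [← Nat.card_eq_of_bijective _ (Sylow.mapSurjective_bijective_of_ker_le_center
    (QuotientGroup.ker_mk' _).le (coprime_card_ker_mk' hodd) (QuotientGroup.mk'_surjective _))]
  exact SpecialLinearGroup.card_sylow_eq hodd hdvd

theorem pairwise_inf_sylow_eq_bot (hodd : Odd q) (hdvd : q ∣ Nat.card K - 1) :
    Pairwise fun P Q : Sylow q PSL(2, K) ↦ (P : Subgroup PSL(2, K)) ⊓ Q = ⊥ :=
  Sylow.pairwise_inf_eq_bot_of_ker_le_center (QuotientGroup.ker_mk' _).le
    (coprime_card_ker_mk' hodd) (QuotientGroup.mk'_surjective _)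
    (SpecialLinearGroup.pairwise_inf_sylow_eq_bot hodd hdvd)

end Matrix.ProjectiveSpecialLinearGroup

theorem stmt4 (p n q : ℕ) [Fact p.Prime] (hn : 0 < n) (hq : q.Prime) (hodd : Odd q)
    (hdvd : q ∣ p ^ n - 1) :
    Nat.card (Sylow q (PSL p n)) = p ^ n * (p ^ n + 1) / 2 ∧
    ∀ P Q : Sylow q (PSL p n), P ≠ Q →
      (P : Subgroup (PSL p n)) ⊓ (Q : Subgroup (PSL p n)) = ⊥ := by
  have : Fact q.Prime := ⟨hq⟩
  have hcard : Nat.card (GaloisField p n) = p ^ n := GaloisField.card p n hn.ne'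
  rw [← hcard] at hdvd ⊢
  exact ⟨Matrix.ProjectiveSpecialLinearGroup.card_sylow_eq hodd hdvd,
    Matrix.ProjectiveSpecialLinearGroup.pairwise_inf_sylow_eq_bot hodd hdvd⟩
end

section
/- The alternating group A_5 is the union of its 21 Sylow subgroups (five Sylow 2-subgroups, ten Sylow 3-subgroups, six Sylow 5-subgroups), and choosing one non-identity element from each Sylow subgroup gives a set of 21 elements no two of which generate a nilpotent subgroup. -/
/-!
Every element of `A₅` has order 1, 2, 3 or 5 and so lies in a Sylow subgroup. The Sylow
subgroups have order 4, 3 or 5, hence are abelian, and the centralizer of a non-identity element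
has the same order as the Sylow subgroups containing it; so every Sylow subgroup is the
centralizer of each of its non-identity elements. Hence distinct Sylow subgroups meet trivially,
which counts them (15 = 5·3 involutions, 20 = 10·2 elements of order 3, 24 = 6·4 of order 5), and
two commuting non-identity elements lie in the same Sylow subgroup. A nilpotent subgroup is the
product of its Sylow subgroups, each contained in an abelian Sylow subgroup of `A₅`, so it is
abelian: if `⟨x, y⟩` were nilpotent, `x` and `y` would commute.
-/

open Subgroup

section

variable {G : Type*} [Group G] {p : ℕ} [Fact p.Prime]

theorem Sylow.exists_mem_of_pow_prime_pow_eq_one {g : G} {k : ℕ} (hg : g ^ p ^ k = 1) :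
    ∃ P : Sylow p G, g ∈ P := by
  obtain ⟨j, -, hj⟩ := (Nat.dvd_prime_pow Fact.out).1 (orderOf_dvd_of_pow_eq_one hg)
  have hpg : IsPGroup p (zpowers g) := .of_card (by rw [Nat.card_zpowers, hj])
  obtain ⟨P, hP⟩ := hpg.exists_le_sylow
  exact ⟨P, hP (mem_zpowers g)⟩

theorem Sylow.card_eq_pow_of_card_eq_mul [Finite G] (P : Sylow p G) {n m : ℕ}
    (hG : Nat.card G = p ^ n * m) (hm : ¬ p ∣ m) : Nat.card P = p ^ n := by
  have hp : p.Prime := Fact.out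
  rw [P.card_eq_multiplicity, hG, Nat.factorization_mul (pow_ne_zero n hp.ne_zero)
    (by rintro rfl; exact hm (dvd_zero p))]
  simp [hp.factorization_self, Nat.factorization_eq_zero_of_not_dvd hm]

theorem IsMulCommutative.of_card_dvd_prime_sq (hG : Nat.card G ∣ p ^ 2) : IsMulCommutative G := by
  obtain ⟨k, hk, hcard⟩ := (Nat.dvd_prime_pow Fact.out).1 hG
  interval_cases k
  · have := (Nat.card_eq_one_iff_unique.1 (by simpa using hcard)).1
    exact .of_comm fun _ _ => Subsingleton.elim _ _
  · have := isCyclic_of_prime_card (p := p) (by simpa using hcard)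
    infer_instance
  · exact IsPGroup.isMulCommutative_of_card_eq_prime_sq hcard

theorem Group.IsNilpotent.isMulCommutative_of_sylow [Finite G] [Group.IsNilpotent G]
    (h : ∀ (p : ℕ) [Fact p.Prime] (P : Sylow p G), IsMulCommutative P) : IsMulCommutative G := by
  have (p : (Nat.card G).primeFactors) : Fact p.1.Prime := ⟨Nat.prime_of_mem_primeFactors p.2⟩
  have (p : (Nat.card G).primeFactors) (P : Sylow p G) : IsMulCommutative P := h p P
  obtain ⟨e⟩ := ((Group.isNilpotent_of_finite_tfae (G := G)).out 0 4).mp ‹_›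
  exact Function.Surjective.mul_comm (f := e.toMulHom) e.surjective inferInstance

theorem Subgroup.isMulCommutative_of_isNilpotent_of_sylow [Finite G]
    (h : ∀ (p : ℕ) [Fact p.Prime] (P : Sylow p G), IsMulCommutative P)
    (H : Subgroup G) [Group.IsNilpotent H] : IsMulCommutative H := by
  refine Group.IsNilpotent.isMulCommutative_of_sylow fun p _ P => ?_
  obtain ⟨Q, hQ⟩ := (P.isPGroup'.map H.subtype).exists_le_sylow
  have := h p Q
  exact .of_setLike_mul_comm fun a ha b hb => Subtype.ext <|
    setLike_mul_comm (s := (Q : Subgroup G)) (hQ ⟨a, ha, rfl⟩) (hQ ⟨b, hb, rfl⟩)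

theorem Sylow.card_mul_card_sub_one_of_trivial_inter [Finite G]
    (hTI : ∀ (P Q : Sylow p G) (g : G), g ∈ P → g ∈ Q → g ≠ 1 → P = Q) (P₀ : Sylow p G) :
    Nat.card (Sylow p G) * (Nat.card P₀ - 1) =
      Nat.card {g : G // g ≠ 1 ∧ g ^ Nat.card P₀ = 1} := by
  have := Fintype.ofFinite (Sylow p G)
  have hcard (P : Sylow p G) : Nat.card P = Nat.card P₀ := by
    rw [P.card_eq_multiplicity, P₀.card_eq_multiplicity]
  have hpow {P : Sylow p G} {g : G} (hg : g ∈ P) : g ^ Nat.card P₀ = 1 := by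
    rw [← hcard P, ← orderOf_dvd_iff_pow_eq_one]; exact P.orderOf_dvd_natCard hg
  let f : (Σ P : Sylow p G, ((P : Set G) \ {1} : Set G)) →
      {g : G // g ≠ 1 ∧ g ^ Nat.card P₀ = 1} :=
    fun x => ⟨x.2, x.2.2.2, hpow x.2.2.1⟩
  have hf : Function.Bijective f := by
    refine ⟨fun x y hxy => ?_, fun g => ?_⟩
    · have hxy : (x.2 : G) = y.2 := congrArg Subtype.val hxy
      exact Sigma.subtype_ext (hTI _ _ _ x.2.2.1 (hxy ▸ y.2.2.1) x.2.2.2) hxy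
    · obtain ⟨P, hP⟩ := exists_mem_of_pow_prime_pow_eq_one (p := p)
        (by rw [← P₀.card_eq_multiplicity]; exact g.2.2)
      exact ⟨⟨P, g, hP, g.2.1⟩, rfl⟩
  have hfiber (P : Sylow p G) : Nat.card ((P : Set G) \ {1} : Set G) = Nat.card P₀ - 1 := by
    rw [Nat.card_coe_set_eq, Set.ncard_sdiff_singleton_of_mem (one_mem P), ← hcard P]
    rfl
  rw [← Nat.card_congr (Equiv.ofBijective f hf), Nat.card_sigma]
  simp only [hfiber, Finset.sum_const, Finset.card_univ, smul_eq_mul, Nat.card_eq_fintype_card]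

end

local notation "A₅" => alternatingGroup (Fin 5)

namespace alternatingGroup

theorem nat_card_fin_five : Nat.card A₅ = 60 := by
  rw [nat_card_alternatingGroup]; simp [Nat.factorial]

theorem nat_card_sylow_fin_five {p : ℕ} [Fact p.Prime] (P : Sylow p A₅) :
    p = 2 ∧ Nat.card P = 4 ∨ p = 3 ∧ Nat.card P = 3 ∨ p = 5 ∧ Nat.card P = 5 ∨
      Nat.card P = 1 := by
  by_cases hdvd : p ∣ 60
  · have : p ∈ Nat.primeFactors 60 := Nat.mem_primeFactors.2 ⟨Fact.out, hdvd, by norm_num⟩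
    have hp : p = 2 ∨ p = 3 ∨ p = 5 := by simpa [Nat.primeFactors] using this
    rcases hp with rfl | rfl | rfl
    · exact .inl ⟨rfl, P.card_eq_pow_of_card_eq_mul (n := 2) (m := 15) nat_card_fin_five
        (by norm_num)⟩
    · exact .inr <| .inl ⟨rfl, P.card_eq_pow_of_card_eq_mul (n := 1) (m := 20) nat_card_fin_five
        (by norm_num)⟩
    · exact .inr <| .inr <| .inl ⟨rfl, P.card_eq_pow_of_card_eq_mul (n := 1) (m := 12)
        nat_card_fin_five (by norm_num)⟩
  · exact .inr <| .inr <| .inr <|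
      P.card_eq_pow_of_card_eq_mul (n := 0) (by simpa using nat_card_fin_five) hdvd

instance isMulCommutative_sylow_fin_five {p : ℕ} [Fact p.Prime] (P : Sylow p A₅) :
    IsMulCommutative P := by
  refine .of_card_dvd_prime_sq (p := p) ?_
  rcases nat_card_sylow_fin_five P with ⟨rfl, h⟩ | ⟨rfl, h⟩ | ⟨rfl, h⟩ | h <;> simp [h]

-- The centralizer of an involution is the Klein four-group through it; that of a 3- or
-- 5-cycle is the cyclic group it generates.
set_option maxRecDepth 10000 in
theorem card_commute_fin_five : ∀ x : A₅, x ≠ 1 → ∀ n ∈ [3, 4, 5], x ^ n = 1 →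
    Fintype.card {g // g * x = x * g} = n := by
  decide

theorem nat_card_centralizer_fin_five {x : A₅} (hx : x ≠ 1) {n : ℕ} (hn : n ∈ [3, 4, 5])
    (hxn : x ^ n = 1) : Nat.card (centralizer {x}) = n := by
  rw [← card_commute_fin_five x hx n hn hxn, ← Nat.card_eq_fintype_card]
  exact Nat.card_congr (Equiv.subtypeEquivRight fun g => mem_centralizer_singleton_iff)

theorem sylow_eq_centralizer_fin_five {p : ℕ} [Fact p.Prime] (P : Sylow p A₅) {x : A₅}
    (hx : x ∈ P) (hx1 : x ≠ 1) : (P : Subgroup A₅) = centralizer {x} := by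
  have hle : (P : Subgroup A₅) ≤ centralizer {x} :=
    (le_centralizer (P : Subgroup A₅)).trans (centralizer_le (by simpa using hx))
  refine eq_of_le_of_card_ge hle ?_
  have hpow : x ^ Nat.card P = 1 := orderOf_dvd_iff_pow_eq_one.1 (P.orderOf_dvd_natCard hx)
  have hne : Nat.card P ≠ 1 := fun h =>
    hx1 (mem_bot.1 (eq_bot_of_card_eq (P : Subgroup A₅) h ▸ hx))
  have hmem : Nat.card P ∈ [3, 4, 5] := by
    rcases nat_card_sylow_fin_five P with ⟨-, h⟩ | ⟨-, h⟩ | ⟨-, h⟩ | h <;> simp_all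
  rw [nat_card_centralizer_fin_five hx1 hmem hpow]

theorem coe_sylow_eq_of_mem_fin_five {p q : ℕ} [Fact p.Prime] [Fact q.Prime] (P : Sylow p A₅)
    (Q : Sylow q A₅) {x : A₅} (hP : x ∈ P) (hQ : x ∈ Q) (hx : x ≠ 1) :
    (P : Subgroup A₅) = Q :=
  (sylow_eq_centralizer_fin_five P hP hx).trans (sylow_eq_centralizer_fin_five Q hQ hx).symm

theorem card_sylow_mul_fin_five {p n m N : ℕ} [Fact p.Prime] (hcard : 60 = p ^ n * m)
    (hm : ¬ p ∣ m) (hN : Nat.card {g : A₅ // g ≠ 1 ∧ g ^ p ^ n = 1} = N) :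
    Nat.card (Sylow p A₅) * (p ^ n - 1) = N := by
  have hP := (default : Sylow p A₅).card_eq_pow_of_card_eq_mul (nat_card_fin_five.trans hcard) hm
  rw [← hN, ← hP]
  exact Sylow.card_mul_card_sub_one_of_trivial_inter
    (fun P Q g hP hQ hg => Sylow.ext (coe_sylow_eq_of_mem_fin_five P Q hP hQ hg)) _

set_option maxRecDepth 10000 in
theorem pow_eq_one_fin_five : ∀ g : A₅, g ^ 2 = 1 ∨ g ^ 3 = 1 ∨ g ^ 5 = 1 := by
  decide

set_option maxRecDepth 10000 in
theorem nat_card_pow_eq_one_fin_five :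
    Nat.card {g : A₅ // g ≠ 1 ∧ g ^ 4 = 1} = 15 ∧
      Nat.card {g : A₅ // g ≠ 1 ∧ g ^ 3 = 1} = 20 ∧
      Nat.card {g : A₅ // g ≠ 1 ∧ g ^ 5 = 1} = 24 := by
  simp only [Nat.card_eq_fintype_card]
  decide

theorem not_isNilpotent_closure_pair_fin_five {p q : ℕ} [Fact p.Prime] [Fact q.Prime]
    {P : Sylow p A₅} {Q : Sylow q A₅} (hne : (P : Subgroup A₅) ≠ Q) {x y : A₅}
    (hx : x ∈ P) (hy : y ∈ Q) (hx1 : x ≠ 1) (hy1 : y ≠ 1) :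
    ¬ Group.IsNilpotent (closure {x, y}) := by
  intro
  have := (closure {x, y}).isMulCommutative_of_isNilpotent_of_sylow fun _ _ => inferInstance
  have hxy : y * x = x * y :=
    setLike_mul_comm (s := closure {x, y}) (subset_closure (by simp)) (subset_closure (by simp))
  have hyP : y ∈ (P : Subgroup A₅) := by
    rw [sylow_eq_centralizer_fin_five P hx hx1]
    exact mem_centralizer_singleton_iff.2 hxy
  exact hne (coe_sylow_eq_of_mem_fin_five P Q hyP hy hy1)

end alternatingGroup

open alternatingGroup in
theorem stmt7 :
    (Nat.card (Sylow 2 (alternatingGroup (Fin 5))) = 5 ∧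
     Nat.card (Sylow 3 (alternatingGroup (Fin 5))) = 10 ∧
     Nat.card (Sylow 5 (alternatingGroup (Fin 5))) = 6) ∧
    (∀ g : alternatingGroup (Fin 5), ∃ p : ℕ, p.Prime ∧
      ∃ P : Sylow p (alternatingGroup (Fin 5)), g ∈ P) ∧
    (∀ p q : ℕ, p.Prime → q.Prime →
      ∀ (P : Sylow p (alternatingGroup (Fin 5))) (Q : Sylow q (alternatingGroup (Fin 5))),
        (P : Subgroup (alternatingGroup (Fin 5))) ≠ (Q : Subgroup (alternatingGroup (Fin 5))) →
        ∀ x ∈ P, ∀ y ∈ Q, x ≠ 1 → y ≠ 1 →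
          ¬ Group.IsNilpotent
            ↥(Subgroup.closure ({x, y} : Set (alternatingGroup (Fin 5))))) := by
  have : Fact (Nat.Prime 5) := ⟨by norm_num⟩
  obtain ⟨h2, h3, h5⟩ := nat_card_pow_eq_one_fin_five
  refine ⟨⟨?_, ?_, ?_⟩, fun g => ?_, fun p q hp hq P Q hne x hx y hy hx1 hy1 => ?_⟩
  · have := card_sylow_mul_fin_five (p := 2) (n := 2) (m := 15) rfl (by norm_num)
      (by simpa using h2)
    omega
  · have := card_sylow_mul_fin_five (p := 3) (n := 1) (m := 20) rfl (by norm_num)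
      (by simpa using h3)
    omega
  · have := card_sylow_mul_fin_five (p := 5) (n := 1) (m := 12) rfl (by norm_num)
      (by simpa using h5)
    omega
  · rcases pow_eq_one_fin_five g with h | h | h
    · exact ⟨2, Nat.prime_two, Sylow.exists_mem_of_pow_prime_pow_eq_one (k := 1) (by simpa)⟩
    · exact ⟨3, Nat.prime_three, Sylow.exists_mem_of_pow_prime_pow_eq_one (k := 1) (by simpa)⟩
    · exact ⟨5, Fact.out, Sylow.exists_mem_of_pow_prime_pow_eq_one (k := 1) (by simpa)⟩
  · have := Fact.mk hp
    have := Fact.mk hq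
    exact not_isNilpotent_closure_pair_fin_five hne hx hy hx1 hy1
end

section
/- Let G be a group satisfying condition (A, n) with n > 1, and let N be a normal non-abelian subgroup of G. Then G/N satisfies condition (A, n−1). -/
/-!
(A, n) says that pairwise non-commuting subsets of `G` have at most `n` elements. If `a, b ∈ N`
do not commute, then neither do two of `x, x a, x b`, so every coset of `N` contains two
non-commuting elements. Hence a pairwise non-commuting set `S ⊆ G ⧸ N` lifts to one in `G` with
one more element: lift each element of `S` but one, and lift that one twice, non-commutingly.
-/

def CondA (G : Type*) [Group G] (n : ℕ) : Prop :=
  ∀ S : Finset G, S.card = n + 1 → ∃ x ∈ S, ∃ y ∈ S, x ≠ y ∧ x * y = y * x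

theorem condA_iff {G : Type*} [Group G] {n : ℕ} :
    CondA G n ↔ ∀ T : Finset G, (T : Set G).Pairwise (fun x y => ¬Commute x y) → T.card ≤ n := by
  refine ⟨fun h T hT => ?_, fun h S hS => ?_⟩
  · by_contra! hlt
    obtain ⟨U, hUT, hU⟩ := Finset.exists_subset_card_eq hlt
    obtain ⟨x, hx, y, hy, hne, hxy⟩ := h U hU
    exact hT (hUT hx) (hUT hy) hne hxy
  · by_contra! hS'
    have := h S fun x hx y hy hne => hS' x hx y hy hne
    omega

theorem Subgroup.exists_not_commute_mul_mul {G : Type*} [Group G] (N : Subgroup G) {a b : G}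
    (ha : a ∈ N) (hb : b ∈ N) (hab : ¬Commute a b) (x : G) :
    ∃ u ∈ N, ∃ v ∈ N, ¬Commute (x * u) (x * v) := by
  by_contra! H
  have hxa : Commute x a := by
    simpa [(IsLeftRegular.all x).commute_mul_left_iff] using (H 1 N.one_mem a ha).symm
  have hxb : Commute x b := by
    simpa [(IsLeftRegular.all x).commute_mul_left_iff] using (H 1 N.one_mem b hb).symm
  refine hab (mul_left_cancel (a := x * x) ?_)
  calc x * x * (a * b) = x * a * (x * b) := by simp only [mul_assoc, hxa.left_comm]
    _ = x * b * (x * a) := H a ha b hb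
    _ = x * x * (b * a) := by simp only [mul_assoc, hxb.left_comm]

theorem exists_pairwise_not_commute_card_succ {G H F : Type*} [Mul G] [Mul H] [FunLike F G H]
    [MulHomClass F G H] {f : F} (hf : Function.Surjective f) {S : Finset H}
    (hS : (S : Set H).Pairwise (fun x y => ¬Commute x y)) {s : H} (hs : s ∈ S) {u v : G}
    (hu : f u = s) (hv : f v = s) (huv : ¬Commute u v) :
    ∃ T : Finset G, (T : Set G).Pairwise (fun x y => ¬Commute x y) ∧ T.card = S.card + 1 := by
  classical
  have hlift : ∀ ⦃x y : G⦄, f x ∈ S → f y ∈ S → f x ≠ f y → ¬Commute x y :=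
    fun x y hx hy hne hxy => hS hx hy hne (hxy.map f)
  have hsymm : Std.Symm fun x y : G => ¬Commute x y := ⟨fun _ _ h hc => h hc.symm⟩
  set g := Function.surjInv hf
  have hfg : ∀ t, f (g t) = t := Function.surjInv_eq hf
  set L := (S.erase s).image g
  have hL : ∀ y ∈ L, f y ∈ S ∧ f y ≠ s := by
    simp only [L, Finset.mem_image, Finset.mem_erase]
    rintro _ ⟨t, ⟨hts, ht⟩, rfl⟩
    rw [hfg]
    exact ⟨ht, hts⟩
  have hcross : ∀ ⦃w⦄, f w = s → ∀ y ∈ L, ¬Commute w y := fun w hw y hy =>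
    hlift (hw ▸ hs) (hL y hy).1 (hw ▸ (hL y hy).2.symm)
  refine ⟨insert u (insert v L), ?_, ?_⟩
  · simp only [Finset.coe_insert, Set.pairwise_insert_of_symm, Set.mem_insert_iff]
    refine ⟨⟨?_, fun y hy _ => hcross hv y hy⟩, ?_⟩
    · intro x hx y hy hne
      obtain ⟨t, -, rfl⟩ := Finset.mem_image.mp hx
      obtain ⟨t', -, rfl⟩ := Finset.mem_image.mp hy
      exact hlift (hL _ hx).1 (hL _ hy).1 (by rw [hfg, hfg]; exact fun h => hne (congrArg g h))
    · rintro y (rfl | hy) -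
      exacts [huv, hcross hu y hy]
  · have hne : u ≠ v := fun h => huv (h ▸ Commute.refl u)
    have hvL : v ∉ L := fun h => (hL v h).2 hv
    have huL : u ∉ L := fun h => (hL u h).2 hu
    rw [Finset.card_insert_of_notMem (by simp [hne, huL]), Finset.card_insert_of_notMem hvL,
      Finset.card_image_of_injective _ (Function.injective_surjInv hf),
      Finset.card_erase_add_one hs]

theorem stmt18_general (G : Type*) [Group G] (n : ℕ) (h : CondA G n)
    (N : Subgroup G) [N.Normal] (hna : ¬ ∀ x ∈ N, ∀ y ∈ N, x * y = y * x) :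
    CondA (G ⧸ N) (n - 1) := by
  push Not at hna
  obtain ⟨a, ha, b, hb, hab⟩ := hna
  rw [condA_iff] at h ⊢
  intro S hS
  obtain rfl | ⟨s, hs⟩ := S.eq_empty_or_nonempty
  · simp
  obtain ⟨x, rfl⟩ := QuotientGroup.mk_surjective s
  obtain ⟨u, hu, v, hv, huv⟩ := N.exists_not_commute_mul_mul ha hb hab x
  obtain ⟨T, hT, hTcard⟩ := exists_pairwise_not_commute_card_succ (QuotientGroup.mk'_surjective N)
    hS hs (QuotientGroup.mk_mul_of_mem x hu) (QuotientGroup.mk_mul_of_mem x hv) huv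
  have := h T hT
  omega

theorem stmt18 (G : Type*) [Group G] (n : ℕ) (hn : 1 < n) (h : CondA G n)
    (N : Subgroup G) [N.Normal] (hna : ¬ ∀ x ∈ N, ∀ y ∈ N, x * y = y * x) :
    CondA (G ⧸ N) (n - 1) :=
  stmt18_general G n h N hna
end
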